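/- Upper regularization bound for absolutely continuous measures: if ρ : ℝ → [0,∞) is a bounded probability density, then for any x ∈ ℝ and 0 < y ≤ 1, ∫ log|x - iy - u| ρ(u) du ≤ ∫ log|x - u| ρ(u) du + y·π·‖ρ‖_∞/3 + y·‖ρ‖_∞·∫_ℝ ∫_0^1 t/(u²+t²) dt du, and in particular ∫ log|x - iy - u| ρ(u) du - ∫ log|x - u| ρ(u) du ≤ C·y·‖ρ‖_∞ for an absolute constant C (one may take C = π²/2). -/

import Mathlib

/-! For `u ≠ x` we have `log|x - iy - u| = log|x - u| + ∫₀^y t / ((x - u)² + t²) dt`. The kernel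
is nonnegative, and by Fubini and `∫_ℝ t / ((x - u)² + t²) du = π` its integral over `u` is `πy`.
Against a density `0 ≤ ρ ≤ M` the log-potential therefore rises by at most `πyM`, and both claims
follow from `∫_ℝ ∫₀¹ t / (u² + t²) dt du = π ≤ π² / 2`. -/

open MeasureTheory intervalIntegral Real Set

theorem integral_le_integral_add_of_ae_eq_add {α : Type*} [MeasurableSpace α] {μ : Measure α}
    {f g k : α → ℝ} (hk : Integrable k μ) (hk0 : 0 ≤ ∫ a, k a ∂μ)
    (hfgk : f =ᵐ[μ] fun a => g a + k a) :
    ∫ a, f a ∂μ ≤ ∫ a, g a ∂μ + ∫ a, k a ∂μ := by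
  by_cases hg : Integrable g μ
  · rw [integral_congr_ae hfgk, integral_add hg hk]
  · have hf : ¬ Integrable f μ := fun hf =>
      hg ((hf.sub hk).congr (hfgk.mono fun a ha => by simp [ha]))
    rw [integral_undef hf, integral_undef hg, zero_add]
    exact hk0

theorem div_sub_sq_add_sq_eq {t : ℝ} (ht : t ≠ 0) (x u : ℝ) :
    t / ((x - u) ^ 2 + t ^ 2) = t⁻¹ * (1 + ((u - x) / t) ^ 2)⁻¹ := by
  field_simp
  ring

theorem integrable_div_sub_sq_add_sq (x : ℝ) {t : ℝ} (ht : t ≠ 0) :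
    Integrable fun u => t / ((x - u) ^ 2 + t ^ 2) := by
  simp_rw [div_sub_sq_add_sq_eq ht]
  exact (((integrable_inv_one_add_sq.comp_div ht).comp_sub_right x).const_mul _)

theorem integral_div_sub_sq_add_sq (x : ℝ) {t : ℝ} (ht : 0 < t) :
    ∫ u, t / ((x - u) ^ 2 + t ^ 2) = π := by
  simp_rw [div_sub_sq_add_sq_eq ht.ne']
  rw [MeasureTheory.integral_const_mul,
    integral_sub_right_eq_self (fun u => (1 + (u / t) ^ 2)⁻¹) x,
    Measure.integral_comp_div (fun v => (1 + v ^ 2)⁻¹), integral_univ_inv_one_add_sq,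
    abs_of_pos ht, smul_eq_mul, inv_mul_cancel_left₀ ht.ne']

theorem integrable_div_sub_sq_add_sq_prod (x y : ℝ) :
    Integrable (fun p : ℝ × ℝ => p.2 / ((x - p.1) ^ 2 + p.2 ^ 2))
      (volume.prod (volume.restrict (Ioc 0 y))) := by
  have hpos : ∀ᵐ t ∂volume.restrict (Ioc 0 y), 0 < t :=
    ae_restrict_of_forall_mem measurableSet_Ioc fun t ht => ht.1
  refine (integrable_prod_iff' (Measurable.aestronglyMeasurable (by fun_prop))).2
    ⟨hpos.mono fun t ht => integrable_div_sub_sq_add_sq x ht.ne',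
      (integrable_const π).congr (hpos.mono fun t ht => ?_)⟩
  simp_rw [norm_of_nonneg (div_nonneg ht.le (by positivity : 0 ≤ (x - _) ^ 2 + t ^ 2))]
  exact (integral_div_sub_sq_add_sq x ht).symm

theorem integrable_intervalIntegral_div_sub_sq_add_sq (x : ℝ) {y : ℝ} (hy : 0 ≤ y) :
    Integrable fun u => ∫ t in 0..y, t / ((x - u) ^ 2 + t ^ 2) := by
  simp_rw [intervalIntegral.integral_of_le hy]
  exact (integrable_div_sub_sq_add_sq_prod x y).integral_prod_left

theorem integral_intervalIntegral_div_sub_sq_add_sq (x : ℝ) {y : ℝ} (hy : 0 ≤ y) :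
    ∫ u, ∫ t in 0..y, t / ((x - u) ^ 2 + t ^ 2) = y * π := by
  simp_rw [intervalIntegral.integral_of_le hy]
  rw [integral_integral_swap (integrable_div_sub_sq_add_sq_prod x y),
    integral_congr_ae (ae_restrict_of_forall_mem measurableSet_Ioc fun t ht =>
      integral_div_sub_sq_add_sq x ht.1)]
  simp [hy]

theorem log_norm_sub_I_mul_sub (x y u : ℝ) :
    log ‖(x : ℂ) - Complex.I * y - u‖ = log ((x - u) ^ 2 + y ^ 2) / 2 := by
  have hnormSq : Complex.normSq ((x : ℂ) - Complex.I * y - u) = (x - u) ^ 2 + y ^ 2 := by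
    simp [Complex.normSq_apply]
    ring
  rw [Complex.norm_def, hnormSq, log_sqrt (by positivity)]

theorem log_norm_sub_I_mul_sub_eq_add_integral {x u : ℝ} (hxu : u ≠ x) (y : ℝ) :
    log ‖(x : ℂ) - Complex.I * y - u‖ = log |x - u| + ∫ t in 0..y, t / ((x - u) ^ 2 + t ^ 2) := by
  have hpos : 0 < (x - u) ^ 2 := by positivity [sub_ne_zero.2 hxu.symm]
  have hderiv : ∀ t ∈ uIcc 0 y, HasDerivAt (fun s => log ((x - u) ^ 2 + s ^ 2) / 2)
      (t / ((x - u) ^ 2 + t ^ 2)) t := fun t _ => by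
    refine ((((hasDerivAt_pow 2 t).const_add ((x - u) ^ 2)).log (by positivity)).div_const
      2).congr_deriv ?_
    norm_num
    field_simp
  have hcont : Continuous fun t => t / ((x - u) ^ 2 + t ^ 2) :=
    continuous_id.div (by fun_prop) fun t => by positivity
  have hlog_sq : log ((x - u) ^ 2) / 2 = log |x - u| := by
    rw [← sq_abs, log_pow]
    push_cast
    ring
  rw [integral_eq_sub_of_hasDerivAt hderiv (hcont.intervalIntegrable 0 y),
    log_norm_sub_I_mul_sub, zero_pow two_ne_zero, add_zero, hlog_sq]
  ring

theorem integral_log_norm_sub_I_mul_mul_le {ρ : ℝ → ℝ} (hmeas : Measurable ρ) (hρ0 : ∀ u, 0 ≤ ρ u)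
    {M : ℝ} (hM : ∀ u, ρ u ≤ M) (x : ℝ) {y : ℝ} (hy : 0 ≤ y) :
    ∫ u : ℝ, log ‖(x : ℂ) - Complex.I * y - u‖ * ρ u ≤ (∫ u, log |x - u| * ρ u) + π * y * M := by
  set K : ℝ → ℝ := fun u => ∫ t in 0..y, t / ((x - u) ^ 2 + t ^ 2)
  have hK : Integrable K := integrable_intervalIntegral_div_sub_sq_add_sq x hy
  have hK0 : ∀ u, 0 ≤ K u := fun u =>
    intervalIntegral.integral_nonneg hy fun t ht => div_nonneg ht.1 (by positivity)
  have hKρ : Integrable fun u => K u * ρ u :=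
    hK.mul_bdd hmeas.aestronglyMeasurable
      (ae_of_all _ fun u => by rw [norm_of_nonneg (hρ0 u)]; exact hM u)
  have hKρ_le : ∫ u, K u * ρ u ≤ π * y * M := calc
    ∫ u, K u * ρ u ≤ ∫ u, K u * M :=
      integral_mono hKρ (hK.mul_const M) fun u => mul_le_mul_of_nonneg_left (hM u) (hK0 u)
    _ = π * y * M := by
      rw [MeasureTheory.integral_mul_const, integral_intervalIntegral_div_sub_sq_add_sq x hy]
      ring
  have hpointwise : (fun u : ℝ => log ‖(x : ℂ) - Complex.I * y - u‖ * ρ u)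
      =ᵐ[volume] fun u => log |x - u| * ρ u + K u * ρ u :=
    (Measure.ae_ne volume x).mono fun u hu => by
      simp only [log_norm_sub_I_mul_sub_eq_add_integral hu, K, add_mul]
  have := integral_le_integral_add_of_ae_eq_add hKρ
    (integral_nonneg fun u => mul_nonneg (hK0 u) (hρ0 u)) hpointwise
  linarith

theorem log_potential_upper_regularization_general
    (ρ : ℝ → ℝ) (hmeas : Measurable ρ) (hρ0 : ∀ u, 0 ≤ ρ u)
    (M : ℝ) (hM : ∀ u, ρ u ≤ M)
    (x y : ℝ) (hy0 : 0 < y) :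
    (∫ u : ℝ, Real.log ‖(x : ℂ) - Complex.I * (y : ℂ) - (u : ℂ)‖ * ρ u ≤
        (∫ u, Real.log |x - u| * ρ u) + y * Real.pi * M / 3
          + y * M * ∫ u : ℝ, ∫ t in (0 : ℝ)..1, t / (u ^ 2 + t ^ 2)) ∧
    ((∫ u : ℝ, Real.log ‖(x : ℂ) - Complex.I * (y : ℂ) - (u : ℂ)‖ * ρ u)
        - (∫ u, Real.log |x - u| * ρ u) ≤ (Real.pi ^ 2 / 2) * y * M) := by
  have hmain := integral_log_norm_sub_I_mul_mul_le hmeas hρ0 hM x hy0.le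
  have hM0 : 0 ≤ M := (hρ0 0).trans (hM 0)
  have hkernel : ∫ u : ℝ, ∫ t in (0 : ℝ)..1, t / (u ^ 2 + t ^ 2) = π := by
    simpa using integral_intervalIntegral_div_sub_sq_add_sq 0 zero_le_one
  refine ⟨?_, ?_⟩
  · have : 0 ≤ y * π * M / 3 := by positivity
    rw [hkernel]
    linarith
  · calc _ ≤ π * y * M := by linarith
      _ ≤ π ^ 2 / 2 * y * M := by gcongr; nlinarith [pi_gt_three]

/-- Upper regularization bound for absolutely continuous measures: if `ρ` is a
bounded (by `M`) compactly supported probability density on `ℝ`, then for any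
`x ∈ ℝ` and `0 < y ≤ 1`,
`∫ log|x - iy - u| ρ(u) du ≤ ∫ log|x - u| ρ(u) du + yπM/3 + yM ∫_ℝ ∫_0^1 t/(u²+t²) dt du`,
and in particular the difference of the two log-potentials is at most `(π²/2)·y·M`. -/
theorem log_potential_upper_regularization
    (ρ : ℝ → ℝ) (hmeas : Measurable ρ) (hρ0 : ∀ u, 0 ≤ ρ u)
    (M : ℝ) (hM : ∀ u, ρ u ≤ M)
    (hprob : ∫ u, ρ u = 1) (hsupp : HasCompactSupport ρ)
    (x y : ℝ) (hy0 : 0 < y) (hy1 : y ≤ 1) :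
    (∫ u : ℝ, Real.log ‖(x : ℂ) - Complex.I * (y : ℂ) - (u : ℂ)‖ * ρ u ≤
        (∫ u, Real.log |x - u| * ρ u) + y * Real.pi * M / 3
          + y * M * ∫ u : ℝ, ∫ t in (0 : ℝ)..1, t / (u ^ 2 + t ^ 2)) ∧
    ((∫ u : ℝ, Real.log ‖(x : ℂ) - Complex.I * (y : ℂ) - (u : ℂ)‖ * ρ u)
        - (∫ u, Real.log |x - u| * ρ u) ≤ (Real.pi ^ 2 / 2) * y * M) :=
  log_potential_upper_regularization_general ρ hmeas hρ0 M hM x y hy0
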